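/- arXiv:2212.12026 — 3 statements merged into one kernel-verified Lean document; each statement's English description precedes it below -/
import Mathlib

section
/- The number of representations of a positive integer K as a sum of two squares of integers (counting order and signs) equals 4(N₁(K) − N₃(K)), where N₁(K) and N₃(K) are the numbers of divisors of K congruent to 1 and 3 modulo 4 respectively. -/
/-!
Let `r(n)` be the number of Gaussian integers of norm `n`. Both `r` and `n ↦ 4 ∑_{d ∣ n} χ₄(d)`
take the value `4` at `1` and satisfy, for every prime `p`,
`f(pn) = f(n) + χ₄(p) (f(n) - f(n/p))`, the last term read as `0` when `p ∤ n`; this determines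
them on positive integers. For the divisor sum the recursion comes from multiplicativity and the
geometric sums `∑_{j ≤ k} χ₄(p)^j`. For `r` it comes from counting the elements of norm `pn`
divisible by a Gaussian prime above `p`: `1 + i` divides every element of even norm; a prime
`p ≡ 3 mod 4` stays prime, so it divides every element of norm `pn`; and for `p = ππ̄ ≡ 1 mod 4`
inclusion–exclusion over `π ∣ w` and `π̄ ∣ w` applies, the intersection being `p ∣ w` because
`π` and `π̄` are not associated.
-/

open Finset

namespace JacobiTwoSquares

open GaussianInt ArithmeticFunction ZMod
open scoped ArithmeticFunction.zeta

local notation "ℤ[i]" => GaussianInt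

section Recursion

variable {R : Type*} [CommRing R]

def DivisorSumRecursion (c f : ℕ → R) : Prop :=
  ∀ p n : ℕ, p.Prime → n ≠ 0 → f (p * n) = f n + c p * (f n - if p ∣ n then f (n / p) else 0)

lemma DivisorSumRecursion.const_mul {c f : ℕ → R} (hf : DivisorSumRecursion c f) (a : R) :
    DivisorSumRecursion c (fun n => a * f n) := by
  intro p n hp hn
  simp only [hf p n hp hn]
  split_ifs <;> ring

lemma DivisorSumRecursion.apply_eq_of_apply_one_eq {c f g : ℕ → R}
    (hf : DivisorSumRecursion c f) (hg : DivisorSumRecursion c g) (h1 : f 1 = g 1) {n : ℕ}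
    (hn : n ≠ 0) : f n = g n := by
  induction n using Nat.strong_induction_on with
  | _ n ih =>
  obtain rfl | hn1 := eq_or_ne n 1
  · exact h1
  have hp := Nat.minFac_prime hn1
  obtain ⟨m, hnm⟩ := Nat.minFac_dvd n
  set p := n.minFac
  have hm : m ≠ 0 := right_ne_zero_of_mul (hnm ▸ hn)
  have hmn : m < n := hnm ▸ lt_mul_left (Nat.pos_of_ne_zero hm) hp.one_lt
  rw [hnm, hf p m hp hm, hg p m hp hm, ih m hmn hm]
  split_ifs with hpm
  · rw [ih (m / p) ((Nat.div_le_self m p).trans_lt hmn)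
      ((Nat.div_ne_zero_iff_of_dvd hpm).2 ⟨hm, hp.ne_zero⟩)]
  · rfl

end Recursion

lemma sum_divisors_prime_pow_mul {R : Type*} [CommSemiring R] {N : ℕ}
    (χ : DirichletCharacter R N) {p m : ℕ} (hp : p.Prime) (hpm : ¬ p ∣ m) (a : ℕ) :
    ∑ d ∈ (p ^ a * m).divisors, χ d =
      (∑ j ∈ range (a + 1), χ p ^ j) * ∑ d ∈ m.divisors, χ d := by
  let F : ArithmeticFunction R := ↑(ζ : ArithmeticFunction ℕ) * toArithmeticFunction (χ ·)
  have hF : F.IsMultiplicative :=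
    isMultiplicative_zeta.natCast.mul χ.isMultiplicative_toArithmeticFunction
  have hF_apply (n : ℕ) : F n = ∑ d ∈ n.divisors, χ d := by
    rw [coe_zeta_mul_apply]
    refine sum_congr rfl fun d hd => ?_
    simp [toArithmeticFunction, (Nat.pos_of_mem_divisors hd).ne']
  rw [← hF_apply, hF.map_mul_of_coprime ((hp.coprime_iff_not_dvd.2 hpm).pow_left a), hF_apply,
    hF_apply, Nat.sum_divisors_prime_pow hp]
  simp

lemma divisorSumRecursion_sum_divisors {R : Type*} [CommRing R] {N : ℕ}
    (χ : DirichletCharacter R N) :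
    DivisorSumRecursion (fun n => χ n) (fun n => ∑ d ∈ n.divisors, χ d) := by
  intro p n hp hn
  dsimp only
  obtain ⟨a, m, hpm, rfl⟩ := Nat.exists_eq_pow_mul_and_not_dvd hn p hp.ne_one
  have hgeom (k : ℕ) : ∑ j ∈ range (k + 1 + 1), χ p ^ j = ∑ j ∈ range (k + 1), χ p ^ j +
      χ p * (∑ j ∈ range (k + 1), χ p ^ j - ∑ j ∈ range k, χ p ^ j) := by
    simp only [sum_range_succ, add_sub_cancel_left, pow_succ']
  rw [← mul_assoc, ← pow_succ', sum_divisors_prime_pow_mul χ hp hpm,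
    sum_divisors_prime_pow_mul χ hp hpm]
  cases a with
  | zero =>
    have : ¬ p ∣ p ^ 0 * m := by simpa using hpm
    rw [if_neg this, hgeom 0, sum_range_zero, sub_zero]
    ring
  | succ a =>
    rw [if_pos (dvd_mul_of_dvd_left (dvd_pow_self p a.succ_ne_zero) m), pow_succ', mul_assoc,
      Nat.mul_div_cancel_left _ hp.pos, sum_divisors_prime_pow_mul χ hp hpm, hgeom (a + 1)]
    ring

lemma reIm_injective : Function.Injective fun z : ℤ[i] => (z.re, z.im) :=
  fun _ _ h => Zsqrtd.ext (congrArg Prod.fst h) (congrArg Prod.snd h)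

noncomputable def normCount (n : ℕ) : ℕ := {z : ℤ[i] | z.norm = n}.ncard

lemma norm_eq_sq_add_sq (z : ℤ[i]) : z.norm = z.re ^ 2 + z.im ^ 2 := by
  rw [Zsqrtd.norm_def]
  ring

lemma abs_re_le_norm (z : ℤ[i]) : |z.re| ≤ z.norm := by
  rw [← Int.natCast_natAbs, norm_eq_sq_add_sq]
  linarith [Int.natAbs_le_self_sq z.re, sq_nonneg z.im]

lemma abs_im_le_norm (z : ℤ[i]) : |z.im| ≤ z.norm := by
  rw [← Int.natCast_natAbs, norm_eq_sq_add_sq]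
  linarith [Int.natAbs_le_self_sq z.im, sq_nonneg z.re]

lemma finite_setOf_norm_eq (n : ℤ) : {z : ℤ[i] | z.norm = n}.Finite := by
  refine (((Set.finite_Icc (-n) n).prod (Set.finite_Icc (-n) n)).preimage
    reIm_injective.injOn).subset fun z (hz : z.norm = n) => ?_
  exact ⟨abs_le.1 (hz ▸ abs_re_le_norm z), abs_le.1 (hz ▸ abs_im_le_norm z)⟩

lemma setOf_norm_eq_one :
    {z : ℤ[i] | z.norm = 1} = ↑({1, -1, ⟨0, 1⟩, ⟨0, -1⟩} : Finset ℤ[i]) := by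
  ext z
  simp only [Set.mem_ofPred_eq, coe_insert, coe_singleton, Set.mem_insert_iff,
    Set.mem_singleton_iff]
  constructor
  · intro h
    obtain ⟨ha1, ha2⟩ := abs_le.1 (h ▸ abs_re_le_norm z)
    obtain ⟨hb1, hb2⟩ := abs_le.1 (h ▸ abs_im_le_norm z)
    obtain ⟨a, b⟩ := z
    dsimp only at ha1 ha2 hb1 hb2
    interval_cases a <;> interval_cases b <;> simp_all [norm_eq_sq_add_sq, Zsqrtd.ext_iff]
  · rintro (rfl | rfl | rfl | rfl) <;> rfl

lemma normCount_one : normCount 1 = 4 := by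
  rw [normCount, Nat.cast_one, setOf_norm_eq_one, Set.ncard_coe_finset]
  decide

lemma prime_of_prime_norm {π : ℤ[i]} (h : Prime π.norm) : Prime π := by
  have : IsLocalHom (Zsqrtd.normMonoidHom (d := -1)) :=
    ⟨fun z hz => (Zsqrtd.isUnit_iff_norm_isUnit z).2 hz⟩
  exact (Irreducible.of_map (f := Zsqrtd.normMonoidHom (d := -1)) h.irreducible).prime

lemma dvd_or_star_dvd_of_norm_eq_mul {π w : ℤ[i]} (hπ : Prime π) {k n : ℤ}
    (hk : π ∣ (k : ℤ[i])) (hw : w.norm = k * n) : π ∣ w ∨ star π ∣ w := by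
  have h : π ∣ w * star w := by
    rw [← Zsqrtd.norm_eq_mul_conj, hw, Int.cast_mul]
    exact dvd_mul_of_dvd_left hk _
  refine (hπ.dvd_or_dvd h).imp_right fun ⟨c, hc⟩ => ⟨star c, ?_⟩
  rw [← star_star w, hc, star_mul, mul_comm]

lemma ncard_dvd_norm_eq_mul {π : ℤ[i]} (hπ : π ≠ 0) (n : ℤ) :
    {w : ℤ[i] | π ∣ w ∧ w.norm = π.norm * n}.ncard = {v : ℤ[i] | v.norm = n}.ncard := by
  have himage : {w : ℤ[i] | π ∣ w ∧ w.norm = π.norm * n} = (π * ·) '' {v | v.norm = n} := by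
    ext w
    constructor
    · rintro ⟨⟨v, rfl⟩, hw⟩
      rw [Zsqrtd.norm_mul] at hw
      exact ⟨v, mul_left_cancel₀ (norm_pos.2 hπ).ne' hw, rfl⟩
    · rintro ⟨v, hv : v.norm = n, rfl⟩
      exact ⟨dvd_mul_right π v, by rw [Zsqrtd.norm_mul, hv]⟩
  rw [himage, Set.ncard_image_of_injective _ (mul_right_injective₀ hπ)]

lemma ncard_natCast_dvd_norm_eq_mul {q : ℕ} (hq : q ≠ 0) (n : ℕ) :
    {w : ℤ[i] | (q : ℤ[i]) ∣ w ∧ w.norm = q * n}.ncard =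
      if q ∣ n then normCount (n / q) else 0 := by
  split_ifs with hqn
  · obtain ⟨m, rfl⟩ := hqn
    have hnorm : (q : ℤ) * ((q * m : ℕ) : ℤ) = (q : ℤ[i]).norm * m := by
      rw [Zsqrtd.norm_natCast]
      push_cast
      ring
    rw [hnorm, ncard_dvd_norm_eq_mul (Nat.cast_ne_zero.2 hq),
      Nat.mul_div_cancel_left m (Nat.pos_of_ne_zero hq), normCount]
  · convert Set.ncard_empty ℤ[i]
    refine Set.eq_empty_of_forall_notMem fun w ⟨⟨v, hv⟩, hw⟩ => hqn ?_
    rw [hv, Zsqrtd.norm_mul, Zsqrtd.norm_natCast, mul_assoc] at hw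
    exact Int.natCast_dvd_natCast.1 ⟨v.norm, (mul_left_cancel₀ (Nat.cast_ne_zero.2 hq) hw).symm⟩

lemma normCount_two_mul (n : ℕ) : normCount (2 * n) = normCount n := by
  have hnorm : (⟨1, 1⟩ : ℤ[i]).norm = 2 := rfl
  have hprime : Prime (⟨1, 1⟩ : ℤ[i]) := prime_of_prime_norm (hnorm ▸ Int.prime_two)
  have hdvd_star : (⟨1, 1⟩ : ℤ[i]) ∣ star ⟨1, 1⟩ := ⟨⟨0, -1⟩, rfl⟩
  have hset : {w : ℤ[i] | w.norm = ((2 * n : ℕ) : ℤ)} =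
      {w | ⟨1, 1⟩ ∣ w ∧ w.norm = (⟨1, 1⟩ : ℤ[i]).norm * n} := by
    ext w
    rw [Set.mem_ofPred_eq, Set.mem_ofPred_eq, hnorm, Nat.cast_mul, Nat.cast_two]
    refine ⟨fun hw => ⟨?_, hw⟩, And.right⟩
    refine (dvd_or_star_dvd_of_norm_eq_mul hprime ?_ hw).elim id hdvd_star.trans
    exact ⟨star ⟨1, 1⟩, by rw [← hnorm, Zsqrtd.norm_eq_mul_conj]⟩
  rw [normCount, hset, ncard_dvd_norm_eq_mul hprime.ne_zero, normCount]

lemma normCount_prime_mul_of_mod_four_eq_three {p : ℕ} (hp : p.Prime) (hp3 : p % 4 = 3)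
    (n : ℕ) : normCount (p * n) = if p ∣ n then normCount (n / p) else 0 := by
  have := Fact.mk hp
  have hprime := prime_of_nat_prime_of_mod_four_eq_three p hp3
  rw [← ncard_natCast_dvd_norm_eq_mul hp.ne_zero, normCount, Nat.cast_mul]
  congr 1
  ext w
  refine ⟨fun hw => ⟨?_, hw⟩, And.right⟩
  simpa using dvd_or_star_dvd_of_norm_eq_mul hprime (k := p) (by simp) hw

lemma exists_prime_norm_eq_not_dvd_star {p : ℕ} (hp : p.Prime) (hp1 : p % 4 = 1) :
    ∃ π : ℤ[i], π.norm = p ∧ Prime π ∧ ¬ π ∣ star π := by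
  have := Fact.mk hp
  obtain ⟨a, b, hab⟩ := Nat.Prime.sq_add_sq (p := p) (by omega)
  have hnorm : (⟨a, b⟩ : ℤ[i]).norm = p := by
    rw [norm_eq_sq_add_sq, ← hab]
    push_cast
    rfl
  refine ⟨⟨a, b⟩, hnorm, prime_of_prime_norm (hnorm ▸ Nat.prime_iff_prime_int.1 hp), ?_⟩
  rintro ⟨c, hc⟩
  have hc1 : c.norm = 1 := by
    have := congrArg Zsqrtd.norm hc
    rw [Zsqrtd.norm_conj, Zsqrtd.norm_mul, hnorm] at this
    exact (mul_eq_left₀ (by exact_mod_cast hp.ne_zero)).1 this.symm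
  have hnot_sq (x : ℕ) : p ≠ x ^ 2 := fun h => Nat.Prime.not_prime_pow le_rfl (h ▸ hp)
  rw [← Set.mem_ofPred_eq (p := fun z : ℤ[i] => z.norm = 1), setOf_norm_eq_one] at hc1
  simp only [coe_insert, coe_singleton, Set.mem_insert_iff, Set.mem_singleton_iff] at hc1
  have hab' : b = 0 ∨ a = 0 ∨ a = b := by
    rcases hc1 with rfl | rfl | rfl | rfl <;>
      simp only [Zsqrtd.ext_iff, Zsqrtd.re_star, Zsqrtd.im_star, Zsqrtd.re_mul, Zsqrtd.im_mul,
        Zsqrtd.re_one, Zsqrtd.im_one, Zsqrtd.re_neg, Zsqrtd.im_neg] at hc <;> omega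
  rcases hab' with rfl | rfl | rfl
  · exact hnot_sq a (by simpa using hab.symm)
  · exact hnot_sq b (by simpa using hab.symm)
  · omega

lemma normCount_prime_mul_of_mod_four_eq_one {p : ℕ} (hp : p.Prime) (hp1 : p % 4 = 1) (n : ℕ) :
    normCount (p * n) + (if p ∣ n then normCount (n / p) else 0) = 2 * normCount n := by
  obtain ⟨π, hπ, hprime, hndvd⟩ := exists_prime_norm_eq_not_dvd_star hp hp1
  have hstar : (star π).norm = p := (Zsqrtd.norm_conj π).trans hπ
  have hp_eq : (p : ℤ[i]) = π * star π := by
    rw [← Zsqrtd.norm_eq_mul_conj, hπ, Int.cast_natCast]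
  set A := {w : ℤ[i] | π ∣ w ∧ w.norm = π.norm * n}
  set B := {w : ℤ[i] | star π ∣ w ∧ w.norm = (star π).norm * n}
  have hunion : {w : ℤ[i] | w.norm = ((p * n : ℕ) : ℤ)} = A ∪ B := by
    ext w
    simp only [A, B, Set.mem_union, Set.mem_ofPred_eq, hπ, hstar, Nat.cast_mul]
    refine ⟨fun hw => ?_, fun h => h.elim And.right And.right⟩
    exact (dvd_or_star_dvd_of_norm_eq_mul hprime (k := p) ⟨star π, by simp [hp_eq]⟩ hw).imp
      (⟨·, hw⟩) (⟨·, hw⟩)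
  have hinter : A ∩ B = {w : ℤ[i] | (p : ℤ[i]) ∣ w ∧ w.norm = p * n} := by
    ext w
    simp only [A, B, Set.mem_inter_iff, Set.mem_ofPred_eq, hπ, hstar]
    constructor
    · rintro ⟨⟨hπw, hw⟩, ⟨v, rfl⟩, -⟩
      obtain ⟨u, rfl⟩ := (hprime.dvd_or_dvd hπw).resolve_left hndvd
      exact ⟨⟨u, by rw [hp_eq]; ring⟩, hw⟩
    · rintro ⟨hpw, hw⟩
      rw [hp_eq] at hpw
      exact ⟨⟨dvd_of_mul_right_dvd hpw, hw⟩, dvd_of_mul_left_dvd hpw, hw⟩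
  have hA : A.Finite := (finite_setOf_norm_eq _).subset fun _ hw => hw.2
  have hB : B.Finite := (finite_setOf_norm_eq _).subset fun _ hw => hw.2
  rw [normCount, hunion, ← ncard_natCast_dvd_norm_eq_mul hp.ne_zero, ← hinter,
    Set.ncard_union_add_ncard_inter A B hA hB, ncard_dvd_norm_eq_mul hprime.ne_zero,
    ncard_dvd_norm_eq_mul (star_ne_zero.2 hprime.ne_zero), normCount, two_mul]

lemma divisorSumRecursion_normCount :
    DivisorSumRecursion (fun n => χ₄ n) (fun n => (normCount n : ℤ)) := by
  intro p n hp _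
  dsimp only
  rcases hp.eq_two_or_odd with rfl | hodd
  · rw [normCount_two_mul, show χ₄ ((2 : ℕ) : ZMod 4) = 0 from rfl, zero_mul, add_zero]
  obtain hp1 | hp3 : p % 4 = 1 ∨ p % 4 = 3 := by omega
  · have h := normCount_prime_mul_of_mod_four_eq_one hp hp1 n
    rw [χ₄_nat_one_mod_four hp1]
    split_ifs at h ⊢ <;> omega
  · have h := normCount_prime_mul_of_mod_four_eq_three hp hp3 n
    rw [χ₄_nat_three_mod_four hp3]
    split_ifs at h ⊢ <;> omega

theorem normCount_eq_four_mul_sum_divisors {n : ℕ} (hn : n ≠ 0) :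
    (normCount n : ℤ) = 4 * ∑ d ∈ n.divisors, χ₄ d :=
  divisorSumRecursion_normCount.apply_eq_of_apply_one_eq
    ((divisorSumRecursion_sum_divisors χ₄).const_mul 4) (by simp [normCount_one]) hn

lemma ncard_sq_add_sq_eq_normCount (n : ℕ) :
    {p : ℤ × ℤ | p.1 ^ 2 + p.2 ^ 2 = (n : ℤ)}.ncard = normCount n := by
  have himage : {p : ℤ × ℤ | p.1 ^ 2 + p.2 ^ 2 = (n : ℤ)} =
      (fun z : ℤ[i] => (z.re, z.im)) '' {z | z.norm = n} := by
    ext ⟨a, b⟩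
    simp only [Set.mem_image, Set.mem_ofPred_eq, norm_eq_sq_add_sq, Prod.mk.injEq]
    exact ⟨fun h => ⟨⟨a, b⟩, h, rfl, rfl⟩, fun ⟨z, hz, ha, hb⟩ => ha ▸ hb ▸ hz⟩
  rw [himage, Set.ncard_image_of_injective _ reIm_injective, normCount]

lemma sum_χ₄_eq_card_sub_card (s : Finset ℕ) :
    ∑ d ∈ s, χ₄ d = (#(s.filter (· % 4 = 1)) : ℤ) - #(s.filter (· % 4 = 3)) := by
  rw [← sum_boole, ← sum_boole, ← sum_sub_distrib]
  refine sum_congr rfl fun d _ => ?_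
  rw [χ₄_nat_eq_if_mod_four]
  split_ifs <;> omega

end JacobiTwoSquares

/-- Jacobi's two-squares theorem: the number of representations of a positive
integer `K` as an ordered sum of two squares of integers equals
`4 * (N₁(K) - N₃(K))` where `Nⱼ(K)` counts divisors of `K` congruent to `j` mod 4. -/
theorem jacobi_two_squares (K : ℕ) (hK : 0 < K) :
    (({p : ℤ × ℤ | p.1 ^ 2 + p.2 ^ 2 = (K : ℤ)}.ncard : ℤ)) =
      4 * (((K.divisors.filter (fun d => d % 4 = 1)).card : ℤ)
            - ((K.divisors.filter (fun d => d % 4 = 3)).card : ℤ)) := by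
  rw [JacobiTwoSquares.ncard_sq_add_sq_eq_normCount,
    JacobiTwoSquares.normCount_eq_four_mul_sum_divisors hK.ne',
    JacobiTwoSquares.sum_χ₄_eq_card_sub_card]
end

section
/- The number of representations of a positive integer K by the quadratic form x² + xy + y² with (x,y) ∈ ℤ² equals 6(N₁(K) − N₂(K)), where N₁(K) and N₂(K) are the numbers of divisors of K congruent to 1 and 2 modulo 3 respectively. -/
/-!
Work in the Eisenstein integers `ℤ[τ]`, `τ = e^{πi/3}`, where `x² + xy + y²` is the norm of
`x + yτ`. Rounding the coordinates of `x * conj y / norm y` makes `ℤ[τ]` Euclidean, hence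
factorial. The count `r K` of elements of norm `K` then behaves, prime by prime, like the divisor
sum of the character `χ` modulo `3`: for `p ∤ m`,
* `r (3ⁿ m) = r m`, since `3 ∣ norm z` forces `1 + τ ∣ z`, and `1 + τ` has norm `3`;
* for `p ≡ 2 (mod 3)` no element has norm `p`, so `p` stays prime and `p ∣ norm z = z * conj z`
  forces `p ∣ z`: `r (pⁿ m)` is `r m` or `0` according to the parity of `n`;
* for `p ≡ 1 (mod 3)`, `p = π * conj π` with non-associated primes `π`, `conj π`, and an element
  of norm `pⁿ⁺¹ m` is divisible either by `π` or by `conj π ^ (n + 1)`, so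
  `r (pⁿ⁺¹ m) = r (pⁿ m) + r m` and `r (pⁿ m) = (n + 1) * r m`.
With the six units, `r 1 = 6`, this gives `r K = 6 * ∑_{d ∣ K} χ d`.
-/

open Finset

/-- `⟨a, b⟩` is `a + b τ`, where `τ² = τ - 1`. -/
@[ext]
structure EisensteinInt where
  re : ℤ
  im : ℤ
  deriving DecidableEq

namespace EisensteinInt

instance : Zero EisensteinInt := ⟨⟨0, 0⟩⟩
instance : One EisensteinInt := ⟨⟨1, 0⟩⟩
instance : Add EisensteinInt := ⟨fun x y => ⟨x.re + y.re, x.im + y.im⟩⟩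
instance : Neg EisensteinInt := ⟨fun x => ⟨-x.re, -x.im⟩⟩
instance : Mul EisensteinInt :=
  ⟨fun x y => ⟨x.re * y.re - x.im * y.im, x.re * y.im + x.im * y.re + x.im * y.im⟩⟩

@[simp] theorem zero_re : (0 : EisensteinInt).re = 0 := rfl
@[simp] theorem zero_im : (0 : EisensteinInt).im = 0 := rfl
@[simp] theorem one_re : (1 : EisensteinInt).re = 1 := rfl
@[simp] theorem one_im : (1 : EisensteinInt).im = 0 := rfl
@[simp] theorem add_re (x y : EisensteinInt) : (x + y).re = x.re + y.re := rfl
@[simp] theorem add_im (x y : EisensteinInt) : (x + y).im = x.im + y.im := rfl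
@[simp] theorem neg_re (x : EisensteinInt) : (-x).re = -x.re := rfl
@[simp] theorem neg_im (x : EisensteinInt) : (-x).im = -x.im := rfl
@[simp] theorem mul_re (x y : EisensteinInt) : (x * y).re = x.re * y.re - x.im * y.im := rfl
@[simp] theorem mul_im (x y : EisensteinInt) :
    (x * y).im = x.re * y.im + x.im * y.re + x.im * y.im := rfl

instance instCommRing : CommRing EisensteinInt where
  add_assoc _ _ _ := by ext <;> simp [add_assoc]
  zero_add _ := by ext <;> simp
  add_zero _ := by ext <;> simp
  add_comm _ _ := by ext <;> simp [add_comm]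
  neg_add_cancel _ := by ext <;> simp
  mul_assoc _ _ _ := by ext <;> simp <;> ring
  one_mul _ := by ext <;> simp
  mul_one _ := by ext <;> simp
  left_distrib _ _ _ := by ext <;> simp <;> ring
  right_distrib _ _ _ := by ext <;> simp <;> ring
  zero_mul _ := by ext <;> simp
  mul_zero _ := by ext <;> simp
  mul_comm _ _ := by ext <;> simp <;> ring
  nsmul := nsmulRec
  zsmul := zsmulRec
  natCast n := ⟨n, 0⟩
  natCast_zero := rfl
  natCast_succ _ := by ext <;> simp
  intCast n := ⟨n, 0⟩
  intCast_ofNat _ := rfl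
  intCast_negSucc n := by
    ext
    · show Int.negSucc n = -((n + 1 : ℕ) : ℤ)
      omega
    · show (0 : ℤ) = -0
      rfl

@[simp] theorem sub_re (x y : EisensteinInt) : (x - y).re = x.re - y.re := by
  simp [sub_eq_add_neg]
@[simp] theorem sub_im (x y : EisensteinInt) : (x - y).im = x.im - y.im := by
  simp [sub_eq_add_neg]

@[simp] theorem natCast_re (n : ℕ) : (n : EisensteinInt).re = n := rfl
@[simp] theorem natCast_im (n : ℕ) : (n : EisensteinInt).im = 0 := rfl
@[simp] theorem intCast_re (n : ℤ) : (n : EisensteinInt).re = n := rfl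
@[simp] theorem intCast_im (n : ℤ) : (n : EisensteinInt).im = 0 := rfl

def equivProd : EisensteinInt ≃ ℤ × ℤ where
  toFun z := (z.re, z.im)
  invFun q := ⟨q.1, q.2⟩
  left_inv _ := rfl
  right_inv _ := rfl

def conj : EisensteinInt →+* EisensteinInt where
  toFun x := ⟨x.re + x.im, -x.im⟩
  map_one' := by ext <;> simp
  map_mul' _ _ := by ext <;> simp <;> ring
  map_zero' := by ext <;> simp
  map_add' _ _ := by ext <;> simp <;> ring

@[simp] theorem conj_re (x : EisensteinInt) : (conj x).re = x.re + x.im := rfl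
@[simp] theorem conj_im (x : EisensteinInt) : (conj x).im = -x.im := rfl

@[simp] theorem conj_conj (x : EisensteinInt) : conj (conj x) = x := by ext <;> simp

def norm : EisensteinInt →*₀ ℤ where
  toFun x := x.re ^ 2 + x.re * x.im + x.im ^ 2
  map_zero' := by simp
  map_one' := by simp
  map_mul' _ _ := by simp; ring

theorem norm_apply (x : EisensteinInt) : norm x = x.re ^ 2 + x.re * x.im + x.im ^ 2 := rfl

theorem mul_conj (x : EisensteinInt) : x * conj x = norm x := by
  ext <;> simp only [mul_re, mul_im, conj_re, conj_im, intCast_re, intCast_im, norm_apply] <;> ring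

@[simp] theorem norm_conj (x : EisensteinInt) : norm (conj x) = norm x := by
  simp [norm_apply]; ring

theorem norm_natCast (n : ℕ) : norm n = n ^ 2 := by simp [norm_apply]

theorem four_mul_norm (x : EisensteinInt) :
    4 * norm x = (2 * x.re + x.im) ^ 2 + 3 * x.im ^ 2 := by
  rw [norm_apply]; ring

theorem norm_nonneg (x : EisensteinInt) : 0 ≤ norm x := by
  nlinarith [four_mul_norm x, sq_nonneg (2 * x.re + x.im), sq_nonneg x.im]

theorem norm_eq_zero {x : EisensteinInt} : norm x = 0 ↔ x = 0 := by
  refine ⟨fun h => ?_, fun h => h ▸ map_zero norm⟩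
  have him : x.im = 0 := by
    nlinarith [four_mul_norm x, sq_nonneg (2 * x.re + x.im), sq_nonneg x.im]
  have hre : x.re = 0 := by nlinarith [four_mul_norm x]
  ext <;> simp [hre, him]

theorem norm_pos {x : EisensteinInt} (hx : x ≠ 0) : 0 < norm x :=
  (norm_nonneg x).lt_of_ne' (mt norm_eq_zero.mp hx)

theorem isUnit_iff_natAbs_norm_eq_one {x : EisensteinInt} : IsUnit x ↔ (norm x).natAbs = 1 := by
  refine ⟨fun h => Int.isUnit_iff_natAbs_eq.mp (h.map norm), fun h => ?_⟩
  have : norm x = 1 := by have := norm_nonneg x; omega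
  exact IsUnit.of_mul_eq_one (conj x) (by rw [mul_conj, this, Int.cast_one])

noncomputable instance : Div EisensteinInt :=
  ⟨fun x y =>
    ⟨round (((x * conj y).re : ℚ) / norm y), round (((x * conj y).im : ℚ) / norm y)⟩⟩

theorem div_re (x y : EisensteinInt) : (x / y).re = round (((x * conj y).re : ℚ) / norm y) := rfl
theorem div_im (x y : EisensteinInt) : (x / y).im = round (((x * conj y).im : ℚ) / norm y) := rfl

noncomputable instance : Mod EisensteinInt := ⟨fun x y => x - y * (x / y)⟩

theorem two_mul_abs_sub_mul_round_le (u : ℤ) {n : ℤ} (hn : 0 < n) :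
    2 * |u - n * round ((u : ℚ) / n)| ≤ n := by
  have hnq : (0 : ℚ) < n := by exact_mod_cast hn
  have key : ((u - n * round ((u : ℚ) / n) : ℤ) : ℚ) =
      n * ((u : ℚ) / n - round ((u : ℚ) / n)) := by
    push_cast; field_simp
  have : 2 * |((u - n * round ((u : ℚ) / n) : ℤ) : ℚ)| ≤ n := by
    rw [key, abs_mul, abs_of_pos hnq]
    nlinarith [abs_sub_round ((u : ℚ) / n)]
  exact_mod_cast this

theorem norm_mod_lt (x : EisensteinInt) {y : EisensteinInt} (hy : y ≠ 0) :
    norm (x % y) < norm y := by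
  have hn := norm_pos hy
  -- multiplying the remainder by `conj y` turns it into the rounding errors of the two coordinates
  have hr : x % y * conj y = ⟨(x * conj y).re - norm y * (x / y).re,
      (x * conj y).im - norm y * (x / y).im⟩ := by
    rw [show x % y = x - y * (x / y) from rfl, sub_mul, mul_right_comm, mul_conj]
    ext <;> simp
  set s := (x * conj y).re - norm y * (x / y).re
  set t := (x * conj y).im - norm y * (x / y).im
  have hs : 2 * |s| ≤ norm y := two_mul_abs_sub_mul_round_le _ hn
  have ht : 2 * |t| ≤ norm y := two_mul_abs_sub_mul_round_le _ hn
  have hst : s * t ≤ |s| * |t| := abs_mul s t ▸ le_abs_self _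
  have hprod : norm (x % y) * norm y = s ^ 2 + s * t + t ^ 2 := by
    rw [← norm_conj y, ← map_mul, hr, norm_apply]
  rw [← sq_abs s, ← sq_abs t] at hprod
  nlinarith [mul_le_mul hs ht (by positivity) hn.le, mul_le_mul hs hs (by positivity) hn.le,
    mul_le_mul ht ht (by positivity) hn.le]

theorem natAbs_norm_le_natAbs_norm_mul (x : EisensteinInt) {y : EisensteinInt} (hy : y ≠ 0) :
    (norm x).natAbs ≤ (norm (x * y)).natAbs := by
  rw [map_mul, Int.natAbs_mul]
  exact Nat.le_mul_of_pos_right _ (Int.natAbs_pos.mpr (norm_pos hy).ne')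

noncomputable instance : EuclideanDomain EisensteinInt :=
  { instCommRing with
    quotient := (· / ·)
    remainder := (· % ·)
    quotient_zero x := by ext <;> simp [div_re, div_im]
    quotient_mul_add_remainder_eq x y := add_sub_cancel _ x
    r := _
    r_wellFounded := (measure (Int.natAbs ∘ norm)).wf
    remainder_lt x y hy := Int.natAbs_lt_natAbs_of_nonneg_of_lt (norm_nonneg _) (norm_mod_lt x hy)
    mul_left_not_lt x y hy := not_lt_of_ge (natAbs_norm_le_natAbs_norm_mul x hy)
    exists_pair_ne := ⟨0, 1, by simp [EisensteinInt.ext_iff]⟩ }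

theorem natCast_dvd_iff {n : ℕ} {z : EisensteinInt} :
    (n : EisensteinInt) ∣ z ↔ (n : ℤ) ∣ z.re ∧ (n : ℤ) ∣ z.im := by
  refine ⟨fun ⟨w, hw⟩ => ⟨⟨w.re, by simp [hw]⟩, ⟨w.im, by simp [hw]⟩⟩, ?_⟩
  rintro ⟨⟨a, ha⟩, ⟨b, hb⟩⟩
  exact ⟨⟨a, b⟩, by ext <;> simp [ha, hb]⟩

theorem norm_emod_three_ne_two (x : EisensteinInt) : norm x % 3 ≠ 2 := by
  rw [norm_apply]
  have ha : x.re % 3 = 0 ∨ x.re % 3 = 1 ∨ x.re % 3 = 2 := by omega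
  have hb : x.im % 3 = 0 ∨ x.im % 3 = 1 ∨ x.im % 3 = 2 := by omega
  rcases ha with ha | ha | ha <;> rcases hb with hb | hb | hb <;>
    simp [pow_two, Int.add_emod, Int.mul_emod, ha, hb]

theorem prime_of_norm_eq_prime {π : EisensteinInt} {p : ℕ} (hp : p.Prime) (hπ : norm π = p) :
    Prime π := by
  refine irreducible_iff_prime.mp ⟨fun h => ?_, fun u v huv => ?_⟩
  · rw [isUnit_iff_natAbs_norm_eq_one, hπ, Int.natAbs_natCast] at h
    exact hp.ne_one h
  · have : (norm u).natAbs * (norm v).natAbs = p := by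
      rw [← Int.natAbs_mul, ← map_mul, ← huv, hπ, Int.natAbs_natCast]
    rw [← this, Nat.prime_mul_iff] at hp
    simp only [isUnit_iff_natAbs_norm_eq_one]
    tauto

theorem exists_norm_eq_of_not_irreducible {p : ℕ} (hp : p.Prime)
    (h : ¬Irreducible (p : EisensteinInt)) : ∃ π : EisensteinInt, norm π = p := by
  have hpu : ¬IsUnit (p : EisensteinInt) := by
    rw [isUnit_iff_natAbs_norm_eq_one, norm_natCast]
    simp [Int.natAbs_pow, hp.ne_one]
  obtain ⟨a, b, hab, ha, hb⟩ : ∃ a b, (p : EisensteinInt) = a * b ∧ ¬IsUnit a ∧ ¬IsUnit b := by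
    simpa [irreducible_iff, hpu, not_forall, not_or] using h
  rw [isUnit_iff_natAbs_norm_eq_one] at ha hb
  have hnorm := (hp.mul_eq_prime_sq_iff ha hb).1 <| by
    rw [← Int.natAbs_mul, ← map_mul, ← hab, norm_natCast, Int.natAbs_pow, Int.natAbs_natCast]
  exact ⟨a, by rw [← hnorm.1, Int.natAbs_of_nonneg (norm_nonneg a)]⟩

theorem prime_natCast_of_mod_three_eq_two {p : ℕ} (hp : p.Prime) (hp3 : p % 3 = 2) :
    Prime (p : EisensteinInt) := by
  refine irreducible_iff_prime.mp (by_contra fun h => ?_)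
  obtain ⟨π, hπ⟩ := exists_norm_eq_of_not_irreducible hp h
  exact norm_emod_three_ne_two π (by rw [hπ]; omega)

theorem exists_dvd_sq_add_add_one {p : ℕ} [Fact p.Prime] (hp : p % 3 = 1) :
    ∃ c : ℤ, (p : ℤ) ∣ c ^ 2 + c + 1 := by
  obtain ⟨x, hx⟩ := exists_prime_orderOf_dvd_card (G := (ZMod p)ˣ) 3 <| by
    rw [ZMod.card_units_eq_totient, Nat.totient_prime Fact.out]
    omega
  have hx : IsPrimitiveRoot (x : ZMod p) 3 := IsPrimitiveRoot.coe_units_iff.mpr (hx ▸ .orderOf x)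
  refine ⟨(x : ZMod p).val, ?_⟩
  rw [← ZMod.intCast_zmod_eq_zero_iff_dvd]
  have h := hx.geom_sum_eq_zero (by norm_num)
  simp only [Finset.sum_range_succ, Finset.sum_range_zero] at h
  push_cast [ZMod.natCast_val, ZMod.cast_id']
  linear_combination h

theorem exists_norm_eq_of_mod_three_eq_one {p : ℕ} (hp : p.Prime) (hp3 : p % 3 = 1) :
    ∃ π : EisensteinInt, norm π = p := by
  have := Fact.mk hp
  obtain ⟨c, hc⟩ := exists_dvd_sq_add_add_one hp3
  refine exists_norm_eq_of_not_irreducible hp fun hirr => ?_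
  -- `p` divides `(c + τ) * conj (c + τ) = c² + c + 1` but neither factor: their `τ`-coordinates
  -- are `±1`
  have hdvd : (p : EisensteinInt) ∣ ⟨c, 1⟩ * conj ⟨c, 1⟩ := by
    rw [mul_conj, norm_apply, ← Int.cast_natCast]
    exact Int.cast_dvd_cast _ _ (by simpa using hc)
  have hp1 : ¬(p : ℤ) ∣ 1 := by exact_mod_cast hp.not_dvd_one
  rcases hirr.prime.dvd_or_dvd hdvd with h | h <;> simp [natCast_dvd_iff, hp1] at h

theorem not_dvd_conj_self {π : EisensteinInt} {p : ℕ} (hp : p.Prime) (hp3 : p ≠ 3)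
    (hπ : norm π = p) : ¬π ∣ conj π := by
  intro h
  have hpZ : Prime (p : ℤ) := Nat.prime_iff_prime_int.mp hp
  -- `π - conj π = π.im * √-3`, and `√-3 = ⟨-1, 2⟩` has norm `3`
  have hsub : π - conj π = (π.im : EisensteinInt) * ⟨-1, 2⟩ := by ext <;> simp; ring
  rcases (prime_of_norm_eq_prime hp hπ).dvd_or_dvd (hsub ▸ dvd_sub dvd_rfl h) with hπim | h3
  · have him : (p : ℤ) ∣ π.im := hpZ.dvd_of_dvd_pow (n := 2) <| by
      simpa [hπ, norm_apply] using map_dvd norm hπim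
    have hre : (p : ℤ) ∣ π.re := hpZ.dvd_of_dvd_pow (n := 2) <| by
      have : π.re ^ 2 = norm π - (π.re + π.im) * π.im := by rw [norm_apply]; ring
      rw [this, hπ]
      exact dvd_sub dvd_rfl (dvd_mul_of_dvd_right him _)
    have := map_dvd norm (natCast_dvd_iff.mpr ⟨hre, him⟩)
    rw [norm_natCast, hπ, ← Int.natCast_pow, Int.natCast_dvd_natCast] at this
    nlinarith [Nat.le_of_dvd hp.pos this, hp.two_le]
  · have := map_dvd norm h3
    rw [hπ, show norm ⟨-1, 2⟩ = ((3 : ℕ) : ℤ) by rfl, Int.natCast_dvd_natCast,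
      Nat.prime_dvd_prime_iff_eq hp Nat.prime_three] at this
    exact hp3 this

def normEq (n : ℕ) : Set EisensteinInt := {z | norm z = n}

theorem finite_normEq (n : ℕ) : (normEq n).Finite := by
  refine (((Set.finite_Icc (-(n : ℤ)) n).prod (Set.finite_Icc (-(n : ℤ)) n)).preimage
    equivProd.injective.injOn).subset fun z hz => ?_
  have hz : z.re ^ 2 + z.re * z.im + z.im ^ 2 = n := hz
  show (-(n : ℤ) ≤ z.re ∧ z.re ≤ n) ∧ (-(n : ℤ) ≤ z.im ∧ z.im ≤ n)
  refine ⟨⟨?_, ?_⟩, ?_, ?_⟩ <;>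
    nlinarith [sq_nonneg (z.re + z.im), sq_nonneg (z.re - 1), sq_nonneg (z.re + 1),
      sq_nonneg (z.im - 1), sq_nonneg (z.im + 1)]

theorem ncard_sep_dvd_normEq_mul {g : EisensteinInt} {k : ℕ} (hg : norm g = k) (hk : k ≠ 0)
    (m : ℕ) : {z ∈ normEq (k * m) | g ∣ z}.ncard = (normEq m).ncard := by
  have hg0 : g ≠ 0 := by
    rintro rfl
    exact hk (by exact_mod_cast (hg.symm.trans (map_zero norm)))
  have : {z ∈ normEq (k * m) | g ∣ z} = (g * ·) '' normEq m := by
    ext z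
    constructor
    · rintro ⟨hz, w, rfl⟩
      refine ⟨w, mul_left_cancel₀ (Nat.cast_ne_zero.mpr hk : (k : ℤ) ≠ 0) ?_, rfl⟩
      simpa [normEq, hg] using hz
    · rintro ⟨w, hw, rfl⟩
      exact ⟨by simp_all [normEq], dvd_mul_right g w⟩
  rw [this, Set.ncard_image_of_injective _ (mul_right_injective₀ hg0)]

theorem ncard_normEq_mul_of_forall_dvd {g : EisensteinInt} {k m : ℕ} (hg : norm g = k)
    (hk : k ≠ 0) (h : ∀ z ∈ normEq (k * m), g ∣ z) : (normEq (k * m)).ncard = (normEq m).ncard := by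
  rw [← ncard_sep_dvd_normEq_mul hg hk m, Set.sep_eq_self_iff_mem_true.mpr h]

theorem one_add_tau_dvd_of_three_dvd_norm {z : EisensteinInt} (h : 3 ∣ norm z) :
    (⟨1, 1⟩ : EisensteinInt) ∣ z := by
  obtain ⟨k, hk⟩ : 3 ∣ z.im - z.re := Int.prime_three.dvd_of_dvd_pow (n := 2) <| by
    have : (z.im - z.re) ^ 2 = norm z - 3 * z.re * z.im := by rw [norm_apply]; ring
    rw [this]
    exact dvd_sub h (dvd_mul_of_dvd_left (dvd_mul_right 3 _) _)
  exact ⟨⟨z.re + k, k⟩, by ext <;> simp; linarith⟩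

theorem ncard_normEq_three_pow_mul (n m : ℕ) :
    (normEq (3 ^ n * m)).ncard = (normEq m).ncard := by
  induction n with
  | zero => simp
  | succ n ih =>
    rw [pow_succ', mul_assoc, ← ih]
    refine ncard_normEq_mul_of_forall_dvd (g := ⟨1, 1⟩) rfl three_ne_zero fun z hz => ?_
    exact one_add_tau_dvd_of_three_dvd_norm ⟨_, by rw [hz]; push_cast; rfl⟩

theorem natCast_dvd_of_dvd_norm {p : ℕ} (hp : p.Prime) (hp3 : p % 3 = 2) {z : EisensteinInt}
    (h : (p : ℤ) ∣ norm z) : (p : EisensteinInt) ∣ z := by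
  have hdvd : (p : EisensteinInt) ∣ z * conj z := by
    rw [mul_conj, ← Int.cast_natCast]
    exact Int.cast_dvd_cast _ _ h
  rcases (prime_natCast_of_mod_three_eq_two hp hp3).dvd_or_dvd hdvd with h | h
  · exact h
  · simpa using map_dvd conj h

theorem normEq_mul_eq_empty {p : ℕ} (hp : p.Prime) (hp3 : p % 3 = 2) {m : ℕ} (hm : ¬p ∣ m) :
    normEq (p * m) = ∅ := by
  refine Set.eq_empty_of_forall_notMem fun z hz => hm ?_
  have hz : norm z = p * m := by simpa [normEq] using hz
  have := map_dvd norm (natCast_dvd_of_dvd_norm hp hp3 ⟨m, hz⟩)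
  rw [norm_natCast, hz, pow_two] at this
  exact_mod_cast Int.dvd_of_mul_dvd_mul_left (by exact_mod_cast hp.ne_zero) this

theorem ncard_normEq_sq_mul {p : ℕ} (hp : p.Prime) (hp3 : p % 3 = 2) (m : ℕ) :
    (normEq (p ^ 2 * m)).ncard = (normEq m).ncard := by
  refine ncard_normEq_mul_of_forall_dvd (norm_natCast p) (pow_ne_zero 2 hp.ne_zero) fun z hz => ?_
  refine natCast_dvd_of_dvd_norm hp hp3 ⟨p * m, ?_⟩
  rw [show norm z = _ from hz]
  push_cast
  ring

theorem ncard_normEq_pow_mul_of_mod_three_eq_two {p : ℕ} (hp : p.Prime) (hp3 : p % 3 = 2)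
    {m : ℕ} (hm : ¬p ∣ m) (n : ℕ) :
    (normEq (p ^ n * m)).ncard = if Even n then (normEq m).ncard else 0 := by
  induction n using Nat.twoStepInduction with
  | zero => simp
  | one => simp [normEq_mul_eq_empty hp hp3 hm]
  | more n ih _ =>
    rw [pow_add, mul_comm (p ^ n), mul_assoc, ncard_normEq_sq_mul hp hp3, ih]
    simp [Nat.even_add]

theorem not_dvd_iff_conj_pow_dvd {p : ℕ} {π : EisensteinInt} (hp : p.Prime) (hp3 : p ≠ 3)
    (hπ : norm π = p) {m : ℕ} (hm : ¬p ∣ m) {n : ℕ} {z : EisensteinInt}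
    (hz : z ∈ normEq (p ^ n * m)) : ¬π ∣ z ↔ conj π ^ n ∣ z := by
  have hπp := prime_of_norm_eq_prime hp hπ
  have hz : norm z = p ^ n * m := by simpa [normEq] using hz
  have hnot : ∀ w, norm w = m → ¬π ∣ w := fun w hw hπw =>
    hm (by exact_mod_cast hπ ▸ hw ▸ map_dvd norm hπw)
  constructor
  · intro hπz
    -- `π ^ n` divides `p ^ n = (π * conj π) ^ n`, which divides `z * conj z`
    have : π ^ n ∣ z * conj z := by
      rw [mul_conj, hz]
      refine ⟨conj π ^ n * m, ?_⟩
      rw [← mul_assoc, ← mul_pow, mul_conj, hπ]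
      push_cast
      ring
    simpa using map_dvd conj (hπp.pow_dvd_of_dvd_mul_left n hπz this)
  · rintro ⟨w, rfl⟩ hπz
    rcases hπp.dvd_or_dvd hπz with h | h
    · exact not_dvd_conj_self hp hp3 hπ (hπp.dvd_of_dvd_pow h)
    · refine hnot w ?_ h
      rw [map_mul, map_pow, norm_conj, hπ] at hz
      exact mul_left_cancel₀ (by exact_mod_cast pow_ne_zero n hp.ne_zero) hz

theorem ncard_normEq_pow_succ_mul {p : ℕ} {π : EisensteinInt} (hp : p.Prime) (hp3 : p ≠ 3)
    (hπ : norm π = p) {m : ℕ} (hm : ¬p ∣ m) (n : ℕ) :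
    (normEq (p ^ (n + 1) * m)).ncard = (normEq (p ^ n * m)).ncard + (normEq m).ncard := by
  have hdiff : normEq (p ^ (n + 1) * m) \ {z | π ∣ z} =
      {z ∈ normEq (p ^ (n + 1) * m) | conj π ^ (n + 1) ∣ z} := by
    ext z
    exact and_congr_right (not_dvd_iff_conj_pow_dvd hp hp3 hπ hm)
  rw [← Set.ncard_inter_add_ncard_sdiff_eq_ncard _ {z | π ∣ z} (finite_normEq _), hdiff]
  congr 1
  · rw [pow_succ', mul_assoc]
    exact ncard_sep_dvd_normEq_mul hπ hp.ne_zero _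
  · refine ncard_sep_dvd_normEq_mul ?_ (pow_ne_zero _ hp.ne_zero) m
    rw [map_pow, norm_conj, hπ]
    push_cast
    rfl

theorem ncard_normEq_pow_mul_of_norm_eq {p : ℕ} {π : EisensteinInt} (hp : p.Prime) (hp3 : p ≠ 3)
    (hπ : norm π = p) {m : ℕ} (hm : ¬p ∣ m) (n : ℕ) :
    (normEq (p ^ n * m)).ncard = (n + 1) * (normEq m).ncard := by
  induction n with
  | zero => simp
  | succ n ih => rw [ncard_normEq_pow_succ_mul hp hp3 hπ hm, ih]; ring

theorem normEq_one : normEq 1 = ↑({⟨1, 0⟩, ⟨-1, 0⟩, ⟨0, 1⟩, ⟨0, -1⟩, ⟨1, -1⟩, ⟨-1, 1⟩} :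
    Finset EisensteinInt) := by
  ext ⟨a, b⟩
  change a ^ 2 + a * b + b ^ 2 = ((1 : ℕ) : ℤ) ↔ _
  simp only [Nat.cast_one, Finset.coe_insert, Finset.coe_singleton, Set.mem_insert_iff,
    Set.mem_singleton_iff, EisensteinInt.mk.injEq]
  constructor
  · intro h
    have ha : -1 ≤ a ∧ a ≤ 1 := by constructor <;> nlinarith [sq_nonneg (a + 2 * b)]
    have hb : -1 ≤ b ∧ b ≤ 1 := by constructor <;> nlinarith [sq_nonneg (2 * a + b)]
    obtain ⟨ha1, ha2⟩ := ha
    obtain ⟨hb1, hb2⟩ := hb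
    interval_cases a <;> interval_cases b <;> simp_all
  · rintro (h | h | h | h | h | h) <;> simp [h]

theorem ncard_normEq_one : (normEq 1).ncard = 6 := by
  rw [normEq_one, Set.ncard_coe_finset]
  rfl

end EisensteinInt

namespace ZMod

def χ₃ : MulChar (ZMod 3) ℤ where
  toFun a :=
    match a with
    | 0 => 0
    | 1 => 1
    | 2 => -1
  map_one' := rfl
  map_mul' := by decide
  map_nonunit' := by decide

theorem χ₃_natCast (d : ℕ) :
    χ₃ d = if d % 3 = 1 then 1 else if d % 3 = 2 then -1 else 0 := by
  rw [← natCast_mod]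
  have : d % 3 = 0 ∨ d % 3 = 1 ∨ d % 3 = 2 := by omega
  rcases this with h | h | h <;> rw [h] <;> rfl

end ZMod

open ZMod

theorem sum_divisors_χ₃_eq (K : ℕ) :
    ∑ d ∈ K.divisors, χ₃ d =
      (#{d ∈ K.divisors | d % 3 = 1} : ℤ) - #{d ∈ K.divisors | d % 3 = 2} := by
  simp only [Finset.card_filter, Nat.cast_sum, ← Finset.sum_sub_distrib, χ₃_natCast]
  refine Finset.sum_congr rfl fun d _ => ?_
  split_ifs <;> simp_all

theorem sum_divisors_χ₃_mul {a b : ℕ} (h : a.Coprime b) :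
    ∑ d ∈ (a * b).divisors, χ₃ d = (∑ d ∈ a.divisors, χ₃ d) * ∑ d ∈ b.divisors, χ₃ d := by
  let f : ArithmeticFunction ℤ := ⟨fun n => χ₃ n, rfl⟩
  have hf_apply (n : ℕ) : f n = χ₃ n := rfl
  have hf : f.IsMultiplicative := ⟨by simp [hf_apply], fun _ => by simp [hf_apply]⟩
  have := (ArithmeticFunction.isMultiplicative_zeta.natCast.mul hf).map_mul_of_coprime h
  simpa only [ArithmeticFunction.coe_zeta_mul_apply, hf_apply] using this

theorem sum_divisors_prime_pow_χ₃ {p : ℕ} (hp : p.Prime) (n : ℕ) :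
    ∑ d ∈ (p ^ n).divisors, χ₃ d = ∑ i ∈ range (n + 1), χ₃ p ^ i := by
  simp [Nat.sum_divisors_prime_pow hp]

namespace EisensteinInt

theorem ncard_normEq_prime_pow_mul {p m : ℕ} (hp : p.Prime) (hm : ¬p ∣ m) (n : ℕ) :
    ((normEq (p ^ n * m)).ncard : ℤ) =
      (∑ i ∈ range (n + 1), χ₃ p ^ i) * (normEq m).ncard := by
  rcases (by omega : p % 3 = 0 ∨ p % 3 = 1 ∨ p % 3 = 2) with h | h | h
  · obtain rfl : p = 3 :=
      ((Nat.prime_dvd_prime_iff_eq Nat.prime_three hp).mp (Nat.dvd_of_mod_eq_zero h)).symm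
    simp [Finset.sum_range_succ', ncard_normEq_three_pow_mul, show χ₃ 3 = 0 from rfl]
  · obtain ⟨π, hπ⟩ := exists_norm_eq_of_mod_three_eq_one hp h
    simp [χ₃_natCast, h, ncard_normEq_pow_mul_of_norm_eq hp (by omega) hπ hm]
  · have hχ : χ₃ p = -1 := by simp [χ₃_natCast, h]
    rw [hχ, neg_one_geom_sum, ncard_normEq_pow_mul_of_mod_three_eq_two hp h hm]
    by_cases he : Even n <;> simp [he, Nat.even_add_one]

theorem ncard_normEq {K : ℕ} (hK : 0 < K) :
    ((normEq K).ncard : ℤ) = 6 * ∑ d ∈ K.divisors, χ₃ d := by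
  induction K using Nat.recOnPrimePow with
  | zero => exact absurd hK (lt_irrefl 0)
  | one => simp [ncard_normEq_one]
  | prime_pow_mul a p n hp hpa hn ih =>
    have ha : 0 < a := Nat.pos_of_ne_zero (by rintro rfl; exact hpa (dvd_zero p))
    rw [ncard_normEq_prime_pow_mul hp hpa, ih ha,
      sum_divisors_χ₃_mul ((Nat.coprime_pow_left_iff hn _ _).2 ((hp.coprime_iff_not_dvd).2 hpa)),
      sum_divisors_prime_pow_χ₃ hp]
    ring

end EisensteinInt

/-- The number of representations of a positive integer `K` by the quadratic form
`x² + xy + y²` over `ℤ²` equals `6 * (N₁(K) - N₂(K))` where `Nⱼ(K)` counts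
divisors of `K` congruent to `j` mod 3. -/
theorem hexagonal_form_representations (K : ℕ) (hK : 0 < K) :
    (({p : ℤ × ℤ | p.1 ^ 2 + p.1 * p.2 + p.2 ^ 2 = (K : ℤ)}.ncard : ℤ)) =
      6 * (((K.divisors.filter (fun d => d % 3 = 1)).card : ℤ)
            - ((K.divisors.filter (fun d => d % 3 = 2)).card : ℤ)) := by
  rw [show {p : ℤ × ℤ | p.1 ^ 2 + p.1 * p.2 + p.2 ^ 2 = (K : ℤ)} =
      EisensteinInt.equivProd.symm ⁻¹' EisensteinInt.normEq K from rfl,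
    ← Equiv.image_eq_preimage_symm,
    Set.ncard_image_of_injective _ EisensteinInt.equivProd.injective,
    EisensteinInt.ncard_normEq hK, sum_divisors_χ₃_eq]
end

section
/- If ψ : ℝ → ℂ is twice differentiable, k ∈ ℤ², Ω a real 2×2 matrix, and Ψ(q₀,q₁,q₂) = exp(i(k₁(ω₁¹q₁+ω₁²q₂) + k₂(ω₂¹q₁+ω₂²q₂))) ψ(q₀), then −ΔΨ = E Ψ, where Δ = A∂₀² + ∂₁² + ∂₂² + (B−1)(cos q₀ ∂₁ − sin q₀ ∂₂)², if and only if −A ψ'' + [Q(k) + (B−1)((ω₁¹k₁+ω₂¹k₂)cos q₀ − (ω₁²k₁+ω₂²k₂)sin q₀)²]ψ = E ψ, where Q(k) = (ω₁¹k₁+ω₂¹k₂)² + (ω₁²k₁+ω₂²k₂)². -/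
noncomputable section

open Real Complex

/-- Second partial derivatives of a complex-valued function on `ℝ³` in the
directions of the coordinate axes. -/
def D0sq (F : ℝ × ℝ × ℝ → ℂ) (q : ℝ × ℝ × ℝ) : ℂ :=
  fderiv ℝ (fun q' => fderiv ℝ F q' (1, 0, 0)) q (1, 0, 0)
def D1 (F : ℝ × ℝ × ℝ → ℂ) (q : ℝ × ℝ × ℝ) : ℂ := fderiv ℝ F q (0, 1, 0)
def D2 (F : ℝ × ℝ × ℝ → ℂ) (q : ℝ × ℝ × ℝ) : ℂ := fderiv ℝ F q (0, 0, 1)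

/-- The Laplace–Beltrami operator on the Bianchi torus:
`Δ = A ∂₀² + ∂₁² + ∂₂² + (B-1)(cos q₀ ∂₁ - sin q₀ ∂₂)²`. -/
def LapB (A B : ℝ) (F : ℝ × ℝ × ℝ → ℂ) (q : ℝ × ℝ × ℝ) : ℂ :=
  (A : ℂ) * D0sq F q + D1 (D1 F) q + D2 (D2 F) q
    + ((B : ℂ) - 1) *
      ((fun G q' => (Real.cos q'.1 : ℂ) * D1 G q' - (Real.sin q'.1 : ℂ) * D2 G q')
        ((fun q' => (Real.cos q'.1 : ℂ) * D1 F q' - (Real.sin q'.1 : ℂ) * D2 F q')) q)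

/-!
`Ψ` is a plane wave in `(q₁, q₂)` times a function of `q₀`, so on it `∂₁` and `∂₂` act as
multiplication by `i c` and `i s`, while `∂₀` only differentiates `ψ`. Hence
`ΔΨ = e^{i(c q₁ + s q₂)} (A ψ'' - (c² + s² + (B - 1)(c cos q₀ - s sin q₀)²) ψ)`, and since the
exponential never vanishes, `-ΔΨ = E Ψ` holds at `q` exactly when the ODE holds at `q₀`.
-/

def planeWave (c s : ℝ) (q : ℝ × ℝ × ℝ) : ℂ :=
  Complex.exp (Complex.I * ((c : ℂ) * q.2.1 + (s : ℂ) * q.2.2))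

def planeWaveMul (c s : ℝ) (f : ℝ → ℂ) (q : ℝ × ℝ × ℝ) : ℂ := planeWave c s q * f q.1

section

variable (c s : ℝ) {f : ℝ → ℂ}

lemma planeWave_ne_zero (q : ℝ × ℝ × ℝ) : planeWave c s q ≠ 0 :=
  Complex.exp_ne_zero _

lemma fderiv_planeWaveMul_apply {q : ℝ × ℝ × ℝ} (hf : DifferentiableAt ℝ f q.1)
    (v : ℝ × ℝ × ℝ) :
    fderiv ℝ (planeWaveMul c s f) q v
      = planeWave c s q * (deriv f q.1 * v.1 + Complex.I * (c * v.2.1 + s * v.2.2) * f q.1) := by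
  -- The phase `i (c q₁ + s q₂)` is ℝ-linear in `q`, hence its own derivative.
  let ℓ : ℝ × ℝ × ℝ →L[ℝ] ℂ := Complex.I • ((c : ℂ) • Complex.ofRealCLM.comp
    ((ContinuousLinearMap.fst ℝ ℝ ℝ).comp (ContinuousLinearMap.snd ℝ ℝ (ℝ × ℝ)))
    + (s : ℂ) • Complex.ofRealCLM.comp
    ((ContinuousLinearMap.snd ℝ ℝ ℝ).comp (ContinuousLinearMap.snd ℝ ℝ (ℝ × ℝ))))
  have hP : planeWave c s = fun q => Complex.exp (ℓ q) := by
    funext q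
    simp [ℓ, planeWave, mul_add]
  have hF : planeWaveMul c s f = (fun q => Complex.exp (ℓ q)) * f ∘ Prod.fst := by
    rw [← hP]
    rfl
  have h := (ℓ.hasFDerivAt (x := q)).cexp.mul (hf.hasFDerivAt.comp q hasFDerivAt_fst)
  rw [hF, h.fderiv]
  simp only [ℓ, hP, smul_add, add_apply, smul_apply,
    ContinuousLinearMap.comp_apply, ContinuousLinearMap.coe_fst', ContinuousLinearMap.coe_snd',
    ofRealCLM_apply, smul_eq_mul, Function.comp_apply, fderiv_eq_smul_deriv, real_smul]
  ring

lemma fderiv_planeWaveMul_apply_fst (hf : Differentiable ℝ f) :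
    (fun q => fderiv ℝ (planeWaveMul c s f) q (1, 0, 0)) = planeWaveMul c s (deriv f) := by
  funext q
  simp [fderiv_planeWaveMul_apply c s (hf q.1), planeWaveMul]

lemma D0sq_planeWaveMul (hf : Differentiable ℝ f) (hf' : Differentiable ℝ (deriv f)) :
    D0sq (planeWaveMul c s f) = planeWaveMul c s (deriv (deriv f)) := by
  funext q
  rw [D0sq, fderiv_planeWaveMul_apply_fst c s hf]
  exact congrFun (fderiv_planeWaveMul_apply_fst c s hf') q

lemma D1_planeWaveMul (hf : Differentiable ℝ f) :
    D1 (planeWaveMul c s f) = planeWaveMul c s (fun x => Complex.I * c * f x) := by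
  funext q
  simp [D1, fderiv_planeWaveMul_apply c s (hf q.1), planeWaveMul]

lemma D2_planeWaveMul (hf : Differentiable ℝ f) :
    D2 (planeWaveMul c s f) = planeWaveMul c s (fun x => Complex.I * s * f x) := by
  funext q
  simp [D2, fderiv_planeWaveMul_apply c s (hf q.1), planeWaveMul]

lemma lapB_planeWaveMul (A B : ℝ) (hf : ContDiff ℝ 2 f) :
    LapB A B (planeWaveMul c s f) = planeWaveMul c s (fun x => A * deriv (deriv f) x
      - ((c : ℂ) ^ 2 + (s : ℂ) ^ 2 + (B - 1) * (c * Real.cos x - s * Real.sin x) ^ 2) * f x) := by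
  have hf1 : Differentiable ℝ f := hf.differentiable (by norm_num)
  have hf2 : Differentiable ℝ (deriv f) :=
    (hf.iterate_deriv' 1 1).differentiable (by norm_num)
  set g : ℝ → ℂ := fun x => Complex.I * (c * Real.cos x - s * Real.sin x) * f x
  have hg : Differentiable ℝ g := by fun_prop
  have hrot : (fun q => (Real.cos q.1 : ℂ) * D1 (planeWaveMul c s f) q
      - (Real.sin q.1 : ℂ) * D2 (planeWaveMul c s f) q) = planeWaveMul c s g := by
    funext q
    simp only [D1_planeWaveMul c s hf1, D2_planeWaveMul c s hf1, planeWaveMul, g]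
    ring
  funext q
  simp only [LapB, hrot]
  rw [D0sq_planeWaveMul c s hf1 hf2, D1_planeWaveMul c s hf1, D2_planeWaveMul c s hf1,
    D1_planeWaveMul c s hg, D2_planeWaveMul c s hg,
    D1_planeWaveMul c s (hf1.const_mul _), D2_planeWaveMul c s (hf1.const_mul _)]
  simp only [planeWaveMul, g]
  linear_combination (planeWave c s q * f q.1 * ((c : ℂ) ^ 2 + (s : ℂ) ^ 2
    + ((B : ℂ) - 1) * ((c : ℂ) * Real.cos q.1 - (s : ℂ) * Real.sin q.1) ^ 2)) * Complex.I_mul_I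

end

/-- Separation of variables: `Ψ(q) = e^{i(k,Ωq)} ψ(q₀)` is an eigenfunction of
the Laplace–Beltrami operator, `-ΔΨ = E Ψ`, if and only if `ψ` satisfies the
(shifted) Mathieu equation
`-A ψ'' + [Q(k) + (B-1)((ω₁¹k₁+ω₂¹k₂)cos x - (ω₁²k₁+ω₂²k₂)sin x)²] ψ = E ψ`,
where `Q(k) = (ω₁¹k₁+ω₂¹k₂)² + (ω₁²k₁+ω₂²k₂)²`. -/
theorem separation_of_variables (A B E : ℝ) (ω11 ω12 ω21 ω22 : ℝ) (k₁ k₂ : ℤ)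
    (ψ : ℝ → ℂ) (hψ : ContDiff ℝ 2 ψ) :
    let c : ℝ := ω11 * k₁ + ω21 * k₂
    let s : ℝ := ω12 * k₁ + ω22 * k₂
    let Q : ℝ := c ^ 2 + s ^ 2
    let Ψ : ℝ × ℝ × ℝ → ℂ := fun q =>
      Complex.exp (Complex.I * ((k₁ : ℂ) * ((ω11 : ℂ) * q.2.1 + (ω12 : ℂ) * q.2.2)
        + (k₂ : ℂ) * ((ω21 : ℂ) * q.2.1 + (ω22 : ℂ) * q.2.2))) * ψ q.1
    ((∀ q : ℝ × ℝ × ℝ, -LapB A B Ψ q = (E : ℂ) * Ψ q) ↔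
      (∀ x : ℝ, -(A : ℂ) * deriv (deriv ψ) x
        + ((Q : ℂ) + ((B : ℂ) - 1) *
            (((c : ℂ) * Real.cos x - (s : ℂ) * Real.sin x) ^ 2)) * ψ x
        = (E : ℂ) * ψ x)) := by
  intro c s Q Ψ
  have hΨ : Ψ = planeWaveMul c s ψ := by
    funext q
    simp only [Ψ, planeWaveMul, planeWave, c, s]
    push_cast
    ring_nf
  have hpoint : ∀ q : ℝ × ℝ × ℝ, -LapB A B Ψ q = E * Ψ q ↔
      -(A : ℂ) * deriv (deriv ψ) q.1 + ((Q : ℂ) + ((B : ℂ) - 1) *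
        (((c : ℂ) * Real.cos q.1 - (s : ℂ) * Real.sin q.1) ^ 2)) * ψ q.1 = E * ψ q.1 := by
    intro q
    rw [hΨ, lapB_planeWaveMul c s A B hψ]
    refine Iff.trans ?_ (mul_right_inj' (planeWave_ne_zero c s q))
    simp only [planeWaveMul, Q]
    push_cast
    constructor <;> intro h <;> linear_combination h
  exact ⟨fun h x => (hpoint (x, 0, 0)).1 (h _), fun h q => (hpoint q).2 (h q.1)⟩

end
end
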